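/- arXiv:2307.15511 — 4 statements merged into one kernel-verified Lean document; each statement's English description precedes it below -/
import Mathlib

section
/- Let X be a real or complex linear space endowed with a norm ‖·‖ (not necessarily complete) and let 1 ≤ p < ∞. Suppose a series ∑_{k=0}^∞ u_k with terms in X is (C,1) summable in X to a vector S ∈ X and that its tails satisfy ∑_{k=n+1}^∞ ‖u_k‖^p = O(1/n^{p-1}) as n → ∞ (i.e., there exist M > 0 and n₀ such that ∑_{k=n+1}^∞ ‖u_k‖^p ≤ M/n^{p-1} for all n ≥ n₀). Then the partial sums S_n converge to S in X. -/
/-!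
Hardy's delayed means: for `d ≥ 1`, `d • (S_n - S)` equals
`(n + d + 1) • (σ_{n+d} - S) - (n + 1) • (σ_n - S)` minus the `d` differences `S_{n+1+i} - S_n`,
each bounded by the variation `∑_{n < k ≤ n + d} ‖u_k‖`. With `d = ⌊n/q⌋ + 1` the coefficients
are `O(q)`, so `S_n → S` as soon as this variation is eventually small for large `q`.
For `p = 1` that follows from summability of `‖u_k‖`; for `p > 1` the power-mean inequality and
the tail bound give `(∑_{n < k ≤ n + d} ‖u_k‖)^p ≤ d^{p-1} M / n^{p-1} ≤ (2/q)^{p-1} M`.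
-/

open Filter Finset Topology

section CesaroMean

variable {X : Type*}

def partialSum [AddCommMonoid X] (u : ℕ → X) (n : ℕ) : X :=
  ∑ k ∈ range (n + 1), u k

noncomputable def cesaroMean [AddCommMonoid X] [Module ℝ X] (u : ℕ → X) (n : ℕ) : X :=
  ((n : ℝ) + 1)⁻¹ • ∑ i ∈ range (n + 1), partialSum u i

lemma partialSum_add [AddCommMonoid X] (u : ℕ → X) (n m : ℕ) :
    partialSum u (n + 1 + m) = partialSum u n + ∑ k ∈ range (m + 1), u (n + 1 + k) := by
  rw [partialSum, partialSum, show n + 1 + m + 1 = (n + 1) + (m + 1) by omega, sum_range_add]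

lemma natCast_add_one_smul_cesaroMean [AddCommMonoid X] [Module ℝ X] (u : ℕ → X) (n : ℕ) :
    ((n : ℝ) + 1) • cesaroMean u n = ∑ i ∈ range (n + 1), partialSum u i :=
  smul_inv_smul₀ n.cast_add_one_ne_zero _

lemma smul_partialSum_sub_eq [AddCommGroup X] [Module ℝ X] (u : ℕ → X) (S : X) (n d : ℕ) :
    (d : ℝ) • (partialSum u n - S) =
      ((n : ℝ) + d + 1) • (cesaroMean u (n + d) - S) - ((n : ℝ) + 1) • (cesaroMean u n - S)
        - ∑ i ∈ range d, (partialSum u (n + 1 + i) - partialSum u n) := by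
  have h := natCast_add_one_smul_cesaroMean u (n + d)
  rw [show n + d + 1 = (n + 1) + d by omega, sum_range_add,
    ← natCast_add_one_smul_cesaroMean] at h
  push_cast at h
  rw [sum_sub_distrib, sum_const, card_range, ← Nat.cast_smul_eq_nsmul ℝ]
  linear_combination (norm := module) -h

lemma norm_partialSum_sub_partialSum_le [SeminormedAddCommGroup X] (u : ℕ → X) (n : ℕ)
    {i d : ℕ} (hi : i < d) :
    ‖partialSum u (n + 1 + i) - partialSum u n‖ ≤ ∑ k ∈ range d, ‖u (n + 1 + k)‖ := by
  rw [partialSum_add, add_sub_cancel_left]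
  exact (norm_sum_le _ _).trans <|
    sum_le_sum_of_subset_of_nonneg (range_subset_range.2 hi) fun _ _ _ => norm_nonneg _

lemma norm_partialSum_sub_le [SeminormedAddCommGroup X] [NormedSpace ℝ X] (u : ℕ → X) (S : X)
    (n : ℕ) {d : ℕ} (hd : 0 < d) :
    ‖partialSum u n - S‖ ≤
      ((n : ℝ) + d + 1) / d * ‖cesaroMean u (n + d) - S‖
        + ((n : ℝ) + 1) / d * ‖cesaroMean u n - S‖ + ∑ k ∈ range d, ‖u (n + 1 + k)‖ := by
  have hd' : (0 : ℝ) < d := by exact_mod_cast hd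
  have hdiff : ‖∑ i ∈ range d, (partialSum u (n + 1 + i) - partialSum u n)‖ ≤
      d * ∑ k ∈ range d, ‖u (n + 1 + k)‖ := by
    refine (norm_sum_le _ _).trans ?_
    simpa using sum_le_sum fun i hi => norm_partialSum_sub_partialSum_le u n (mem_range.1 hi)
  rw [← mul_le_mul_iff_of_pos_left hd']
  calc (d : ℝ) * ‖partialSum u n - S‖ = ‖(d : ℝ) • (partialSum u n - S)‖ := by
        rw [norm_smul, Real.norm_natCast]
    _ ≤ ((n : ℝ) + d + 1) * ‖cesaroMean u (n + d) - S‖ + ((n : ℝ) + 1) * ‖cesaroMean u n - S‖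
          + d * ∑ k ∈ range d, ‖u (n + 1 + k)‖ := by
        rw [smul_partialSum_sub_eq, ← norm_smul_of_nonneg (by positivity),
          ← norm_smul_of_nonneg (by positivity)]
        exact (norm_sub_le _ _).trans (add_le_add (norm_sub_le _ _) hdiff)
    _ = d * (((n : ℝ) + d + 1) / d * ‖cesaroMean u (n + d) - S‖
          + ((n : ℝ) + 1) / d * ‖cesaroMean u n - S‖ + ∑ k ∈ range d, ‖u (n + 1 + k)‖) := by
        field_simp

lemma natCast_add_one_div_le (n : ℕ) {q : ℕ} (hq : 0 < q) :
    ((n : ℝ) + 1) / ((n / q + 1 : ℕ) : ℝ) ≤ q := by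
  rw [div_le_iff₀ (by positivity)]
  exact_mod_cast Nat.lt_mul_div_succ n hq

def SmallBlockVariation [SeminormedAddCommGroup X] (u : ℕ → X) : Prop :=
  ∀ ε > 0, ∃ q : ℕ, 0 < q ∧ ∀ᶠ n in atTop, ∑ k ∈ range (n / q + 1), ‖u (n + 1 + k)‖ < ε

theorem tendsto_partialSum_of_smallBlockVariation [SeminormedAddCommGroup X] [NormedSpace ℝ X]
    {u : ℕ → X} {S : X} (hσ : Tendsto (cesaroMean u) atTop (𝓝 S))
    (hu : SmallBlockVariation u) : Tendsto (partialSum u) atTop (𝓝 S) := by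
  rw [Metric.tendsto_nhds]
  intro ε hε
  obtain ⟨q, hq, hvar⟩ := hu (ε / 2) (half_pos hε)
  have hσ0 : Tendsto (fun n => ‖cesaroMean u n - S‖) atTop (𝓝 0) :=
    tendsto_iff_norm_sub_tendsto_zero.1 hσ
  have hdelay : Tendsto (fun n => n + (n / q + 1)) atTop atTop :=
    tendsto_atTop_mono (fun n => Nat.le_add_right n _) tendsto_id
  have hmeans : Tendsto (fun n => ((q : ℝ) + 1) *
      (‖cesaroMean u (n + (n / q + 1)) - S‖ + ‖cesaroMean u n - S‖)) atTop (𝓝 0) := by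
    simpa using ((hσ0.comp hdelay).add hσ0).const_mul ((q : ℝ) + 1)
  filter_upwards [hvar, hmeans.eventually (gt_mem_nhds (half_pos hε))] with n hvar_n hmeans_n
  have hcoef := natCast_add_one_div_le n hq
  have hcoef' : ((n : ℝ) + ((n / q + 1 : ℕ) : ℝ) + 1) / ((n / q + 1 : ℕ) : ℝ) ≤ q + 1 := by
    rw [add_right_comm, add_div, div_self (by positivity)]
    linarith
  rw [dist_eq_norm]
  calc ‖partialSum u n - S‖ ≤ _ := norm_partialSum_sub_le u S n (Nat.succ_pos _)
    _ ≤ ((q : ℝ) + 1) * ‖cesaroMean u (n + (n / q + 1)) - S‖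
          + ((q : ℝ) + 1) * ‖cesaroMean u n - S‖
          + ∑ k ∈ range (n / q + 1), ‖u (n + 1 + k)‖ := by
        gcongr
        linarith
    _ < ε / 2 + ε / 2 := by rw [mul_add] at hmeans_n; linarith
    _ = ε := add_halves ε

lemma smallBlockVariation_of_summable_norm [SeminormedAddCommGroup X] {u : ℕ → X}
    (hu : Summable fun k => ‖u k‖) : SmallBlockVariation u := by
  intro ε hε
  refine ⟨1, one_pos, ?_⟩
  have htail : Tendsto (fun n => ∑' k, ‖u (k + (n + 1))‖) atTop (𝓝 0) :=
    (tendsto_sum_nat_add fun k => ‖u k‖).comp (tendsto_add_atTop_nat 1)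
  filter_upwards [htail.eventually (gt_mem_nhds hε)] with n hn
  calc ∑ k ∈ range (n / 1 + 1), ‖u (n + 1 + k)‖ ≤ ∑' k, ‖u (k + (n + 1))‖ := by
        simp_rw [add_comm (n + 1)]
        exact ((summable_nat_add_iff (n + 1)).2 hu).sum_le_tsum _ fun _ _ => norm_nonneg _
    _ < ε := hn

lemma sum_range_rpow_le_mul_tsum {f : ℕ → ℝ} {p : ℝ} (hp : 1 ≤ p) (hf : ∀ k, 0 ≤ f k)
    (hsum : Summable fun k => f k ^ p) (d : ℕ) :
    (∑ k ∈ range d, f k) ^ p ≤ (d : ℝ) ^ (p - 1) * ∑' k, f k ^ p := by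
  calc (∑ k ∈ range d, f k) ^ p ≤ (#(range d) : ℝ) ^ (p - 1) * ∑ k ∈ range d, f k ^ p :=
        Real.rpow_sum_le_const_mul_sum_rpow_of_nonneg _ hp fun k _ => hf k
    _ ≤ (d : ℝ) ^ (p - 1) * ∑' k, f k ^ p := by
        rw [card_range]
        gcongr
        exact Summable.sum_le_tsum _ (fun k _ => Real.rpow_nonneg (hf k) p) hsum

lemma smallBlockVariation_of_tail_rpow_le [SeminormedAddCommGroup X] {u : ℕ → X} {p M : ℝ}
    {n₀ : ℕ} (hp : 1 < p) (hsum : Summable fun k => ‖u k‖ ^ p)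
    (htail : ∀ n : ℕ, n₀ ≤ n → ∑' k : ℕ, ‖u (n + 1 + k)‖ ^ p ≤ M / (n : ℝ) ^ (p - 1)) :
    SmallBlockVariation u := by
  intro ε hε
  have hsmall : Tendsto (fun q : ℕ => (2 / (q : ℝ)) ^ (p - 1) * M) atTop (𝓝 0) := by
    simpa [Real.zero_rpow (sub_pos.2 hp).ne'] using
      ((tendsto_const_div_atTop_nhds_zero_nat (2 : ℝ)).rpow_const
        (Or.inr (sub_nonneg.2 hp.le))).mul_const M
  obtain ⟨q, hqε, hq⟩ := ((hsmall.eventually (gt_mem_nhds (Real.rpow_pos_of_pos hε p))).and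
    (eventually_gt_atTop 0)).exists
  refine ⟨q, hq, ?_⟩
  filter_upwards [eventually_ge_atTop (max n₀ q)] with n hn
  have hqn : q ≤ n := le_of_max_le_right hn
  have hn_pos : (0 : ℝ) < n := by exact_mod_cast hq.trans_le hqn
  have hsum_n : Summable fun k => ‖u (n + 1 + k)‖ ^ p := by
    simpa [add_comm] using (summable_nat_add_iff (n + 1)).2 hsum
  have hblock : ((n / q + 1 : ℕ) : ℝ) ≤ 2 / q * n := by
    have hq' : (0 : ℝ) < q := by exact_mod_cast hq
    have : (1 : ℝ) ≤ n / q := by rw [le_div_iff₀ hq', one_mul]; exact_mod_cast hqn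
    calc ((n / q + 1 : ℕ) : ℝ) ≤ n / q + n / q := by push_cast; gcongr; exact Nat.cast_div_le
      _ = 2 / q * n := by ring
  rw [← Real.rpow_lt_rpow_iff (z := p) (by positivity) hε.le (by linarith)]
  calc (∑ k ∈ range (n / q + 1), ‖u (n + 1 + k)‖) ^ p
      ≤ ((n / q + 1 : ℕ) : ℝ) ^ (p - 1) * ∑' k, ‖u (n + 1 + k)‖ ^ p :=
        sum_range_rpow_le_mul_tsum hp.le (fun _ => norm_nonneg _) hsum_n _
    _ ≤ (2 / q * n) ^ (p - 1) * (M / (n : ℝ) ^ (p - 1)) := by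
        gcongr
        exact htail n (le_of_max_le_left hn)
    _ = (2 / q) ^ (p - 1) * M := by
        rw [Real.mul_rpow (by positivity) hn_pos.le]
        field_simp
    _ < ε ^ p := hqε

end CesaroMean

theorem tauberian_cesaro_tail_bigO_general
    {X : Type*} [NormedAddCommGroup X] [NormedSpace ℝ X]
    (u : ℕ → X) (S : X) (p : ℝ) (hp : 1 ≤ p)
    (hC1 : Tendsto (fun n : ℕ =>
        ((n : ℝ) + 1)⁻¹ • ∑ i ∈ range (n + 1), ∑ k ∈ range (i + 1), u k)
      atTop (𝓝 S))
    (hSummable : Summable fun k : ℕ => ‖u k‖ ^ p)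
    (M : ℝ) (n₀ : ℕ)
    (htail : ∀ n : ℕ, n₀ ≤ n →
        (∑' k : ℕ, ‖u (n + 1 + k)‖ ^ p) ≤ M / (n : ℝ) ^ (p - 1)) :
    Tendsto (fun n : ℕ => ∑ k ∈ range (n + 1), u k) atTop (𝓝 S) := by
  refine tendsto_partialSum_of_smallBlockVariation hC1 ?_
  rcases hp.eq_or_lt with rfl | hp
  · exact smallBlockVariation_of_summable_norm (by simpa using hSummable)
  · exact smallBlockVariation_of_tail_rpow_le hp hSummable htail

/-- **A Tauberian theorem** (Theorem 1). Let `X` be a real or complex linear space endowed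
with a norm (not necessarily complete) and `1 ≤ p < ∞`. If a series `∑ u_k` in `X` is
`(C,1)` summable to `S ∈ X` and its tails satisfy
`∑_{k=n+1}^∞ ‖u_k‖^p = O(1/n^{p-1})` as `n → ∞`, then the partial sums converge to `S`. -/
theorem tauberian_cesaro_tail_bigO
    {X : Type*} [NormedAddCommGroup X] [NormedSpace ℝ X]
    (u : ℕ → X) (S : X) (p : ℝ) (hp : 1 ≤ p)
    (hC1 : Tendsto (fun n : ℕ =>
        ((n : ℝ) + 1)⁻¹ • ∑ i ∈ range (n + 1), ∑ k ∈ range (i + 1), u k)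
      atTop (𝓝 S))
    (hSummable : Summable fun k : ℕ => ‖u k‖ ^ p)
    (M : ℝ) (hM : 0 < M) (n₀ : ℕ)
    (htail : ∀ n : ℕ, n₀ ≤ n →
        (∑' k : ℕ, ‖u (n + 1 + k)‖ ^ p) ≤ M / (n : ℝ) ^ (p - 1)) :
    Tendsto (fun n : ℕ => ∑ k ∈ range (n + 1), u k) atTop (𝓝 S) :=
  tauberian_cesaro_tail_bigO_general u S p hp hC1 hSummable M n₀ htail
end

section
/- Let X be a normed linear space, (u_k)_{k≥0} a sequence in X, and let p > 1 and q satisfy 1/p + 1/q = 1. Then for all integers n ≥ 1 and m ≥ 2, ‖σ_{n,m} − S_n‖ ≤ (m−1)^{1/q} (∑_{j=n+1}^{n+m−1} ‖u_j‖^p)^{1/p}. -/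
open Finset

/-! `σ_{n,m} - S_n` is the average of the differences `S_{n+i} - S_n` for `i < m`, each of norm at
most `∑_{j=n+1}^{n+m-1} ‖u_j‖`; Hölder's inequality against the constant `1` on these `m - 1`
indices turns that sum into `(m-1)^{1/q} (∑ ‖u_j‖^p)^{1/p}`. -/

section

variable {ι E : Type*}

theorem Real.sum_le_card_rpow_mul_sum_rpow (s : Finset ι) {f : ι → ℝ} {p q : ℝ}
    (hpq : p.HolderConjugate q) (hf : ∀ i ∈ s, 0 ≤ f i) :
    ∑ i ∈ s, f i ≤ (#s : ℝ) ^ (1 / q) * (∑ i ∈ s, f i ^ p) ^ (1 / p) := by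
  simpa [mul_comm] using Real.inner_le_Lp_mul_Lq_of_nonneg s (g := fun _ ↦ 1) hpq hf
    (fun _ _ ↦ zero_le_one)

theorem norm_inv_card_smul_sum_sub_le [SeminormedAddCommGroup E] [NormedSpace ℝ E]
    {s : Finset ι} (hs : s.Nonempty) {f : ι → E} {c : E} {r : ℝ}
    (hf : ∀ i ∈ s, ‖f i - c‖ ≤ r) :
    ‖(#s : ℝ)⁻¹ • ∑ i ∈ s, f i - c‖ ≤ r := by
  rw [← dist_eq_norm, ← Metric.mem_closedBall, smul_sum]
  refine (convex_closedBall c r).sum_mem (fun _ _ ↦ by positivity) ?_ fun i hi ↦ ?_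
  · rw [sum_const, nsmul_eq_mul, mul_inv_cancel₀ (by simpa using hs.ne_empty)]
  · simpa [dist_eq_norm] using hf i hi

theorem norm_sum_range_sub_sum_range_le [SeminormedAddCommGroup E] (u : ℕ → E) {a b : ℕ}
    (hab : a ≤ b) {t : Finset ℕ} (ht : Ico a b ⊆ t) :
    ‖∑ k ∈ range b, u k - ∑ k ∈ range a, u k‖ ≤ ∑ j ∈ t, ‖u j‖ := by
  rw [← sum_Ico_eq_sub _ hab]
  exact (norm_sum_le _ _).trans
    (sum_le_sum_of_subset_of_nonneg ht fun _ _ _ ↦ norm_nonneg _)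

end

theorem delayed_cesaro_mean_norm_bound_general
    {X : Type*} [NormedAddCommGroup X] [NormedSpace ℝ X]
    (u : ℕ → X) (p q : ℝ) (hp : 1 < p) (hpq : 1 / p + 1 / q = 1)
    (n m : ℕ) (hm : 2 ≤ m) :
    ‖(m : ℝ)⁻¹ • (∑ i ∈ range m, ∑ k ∈ range (n + i + 1), u k)
        - ∑ k ∈ range (n + 1), u k‖
      ≤ ((m : ℝ) - 1) ^ (1 / q) *
          (∑ j ∈ Finset.Icc (n + 1) (n + m - 1), ‖u j‖ ^ p) ^ (1 / p) := by
  have hpq' : p.HolderConjugate q :=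
    Real.holderConjugate_iff.mpr ⟨hp, by simpa only [one_div] using hpq⟩
  have hcard : (#(Icc (n + 1) (n + m - 1)) : ℝ) = m - 1 := by
    rw [Nat.card_Icc, show n + m - 1 + 1 - (n + 1) = m - 1 by omega, Nat.cast_sub (by omega),
      Nat.cast_one]
  calc _ = ‖(#(range m) : ℝ)⁻¹ • (∑ i ∈ range m, ∑ k ∈ range (n + i + 1), u k)
        - ∑ k ∈ range (n + 1), u k‖ := by rw [card_range]
    _ ≤ ∑ j ∈ Icc (n + 1) (n + m - 1), ‖u j‖ :=
        norm_inv_card_smul_sum_sub_le (nonempty_range_iff.mpr (by omega)) fun i hi ↦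
          norm_sum_range_sub_sum_range_le u (by omega) fun j hj ↦ by
            simp only [mem_Ico, mem_Icc, mem_range] at hi hj ⊢; omega
    _ ≤ _ := by
        rw [← hcard]
        exact Real.sum_le_card_rpow_mul_sum_rpow _ hpq' fun _ _ ↦ norm_nonneg _

/-- For a sequence `(u_k)` in a normed linear space, with `p > 1`, `1/p + 1/q = 1`,
and integers `n ≥ 1`, `m ≥ 2`, the delayed Cesàro mean `σ_{n,m}` satisfies
`‖σ_{n,m} - S_n‖ ≤ (m-1)^{1/q} (∑_{j=n+1}^{n+m-1} ‖u_j‖^p)^{1/p}`. -/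
theorem delayed_cesaro_mean_norm_bound
    {X : Type*} [NormedAddCommGroup X] [NormedSpace ℝ X]
    (u : ℕ → X) (p q : ℝ) (hp : 1 < p) (hpq : 1 / p + 1 / q = 1)
    (n m : ℕ) (hn : 1 ≤ n) (hm : 2 ≤ m) :
    ‖(m : ℝ)⁻¹ • (∑ i ∈ range m, ∑ k ∈ range (n + i + 1), u k)
        - ∑ k ∈ range (n + 1), u k‖
      ≤ ((m : ℝ) - 1) ^ (1 / q) *
          (∑ j ∈ Finset.Icc (n + 1) (n + m - 1), ‖u j‖ ^ p) ^ (1 / p) :=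
  delayed_cesaro_mean_norm_bound_general u p q hp hpq n m hm
end

section
/- Let X be a complex Banach space that is a linear subspace of L^1(T) such that f(·+a) ∈ X whenever f ∈ X and a ∈ T. Then the norm ‖·‖_X of X is equivalent to some norm ‖·‖ on X satisfying (H1), (H2), (H3) if and only if ‖·‖_X satisfies (H1*) and (H3*). -/
open MeasureTheory Filter Topology AddCircle

set_option maxHeartbeats 400000

instance fact_two_pi_pos : Fact (0 < 2 * Real.pi) := ⟨Real.two_pi_pos⟩

/-- **Characterization of homogeneous norms** (Theorem 2). Let `X` be a complex Banach space
which is a linear subspace of `L¹(𝕋)` (realized by an injective linear map `J` into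
`L¹(𝕋) = Lp ℂ 1 haarAddCircle`, whose norm is the normalized `L¹` norm) closed under
translations (realized by the operators `τ a` with `J (τ a f) = f(· + a)` a.e.). Then the
norm of `X` is equivalent to a norm `N` satisfying conditions (H1), (H2), (H3) if and only
if the norm of `X` satisfies (H1*) and (H3*). -/
theorem homogeneous_norm_characterization
    {X : Type*} [NormedAddCommGroup X] [NormedSpace ℂ X] [CompleteSpace X]
    (J : X →ₗ[ℂ] Lp ℂ 1 (@haarAddCircle (2 * Real.pi) _))
    (hJ : Function.Injective J)
    (τ : AddCircle (2 * Real.pi) → X →ₗ[ℂ] X)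
    (hτ : ∀ (a : AddCircle (2 * Real.pi)) (f : X),
      (J (τ a f) : AddCircle (2 * Real.pi) → ℂ)
        =ᵐ[haarAddCircle] fun x => (J f : AddCircle (2 * Real.pi) → ℂ) (x + a)) :
    (∃ N : X → ℝ,
      -- `N` is a norm on `X`
      (∀ f : X, 0 ≤ N f) ∧
      (∀ f : X, N f = 0 ↔ f = 0) ∧
      (∀ f g : X, N (f + g) ≤ N f + N g) ∧
      (∀ (c : ℂ) (f : X), N (c • f) = ‖c‖ * N f) ∧
      -- `N` is equivalent to the norm of `X`
      (∃ c₁ : ℝ, 0 < c₁ ∧ ∃ c₂ : ℝ, 0 < c₂ ∧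
        ∀ f : X, c₁ * ‖f‖ ≤ N f ∧ N f ≤ c₂ * ‖f‖) ∧
      -- (H1)
      (∀ f : X, ‖J f‖ ≤ N f) ∧
      -- (H2)
      (∀ (a : AddCircle (2 * Real.pi)) (f : X), N (τ a f) = N f) ∧
      -- (H3)
      (∀ (f : X) (a : AddCircle (2 * Real.pi)),
        Tendsto (fun b => N (τ b f - τ a f)) (𝓝 a) (𝓝 0)))
    ↔
    ((∃ c : ℝ, 0 < c ∧ ∀ f : X, ‖J f‖ ≤ c * ‖f‖) ∧
      (∀ f : X, Tendsto (fun a => ‖τ a f - f‖) (𝓝 0) (𝓝 0))) := by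
  have mp : ∀ a : AddCircle (2 * Real.pi), MeasurePreserving (fun x => x + a) haarAddCircle haarAddCircle :=
    fun a => measurePreserving_add_right haarAddCircle a
  have hcomp : ∀ (a : AddCircle (2 * Real.pi)) (f : X),
      ((J f : AddCircle (2 * Real.pi) → ℂ) ∘ (fun x => x + a))
        = fun x => (J f : AddCircle (2 * Real.pi) → ℂ) (x + a) := fun a f => rfl
  have tau_zero : ∀ f : X, τ 0 f = f := by
    intro f
    apply hJ
    apply Lp.ext
    refine (hτ 0 f).trans (Filter.EventuallyEq.of_eq ?_)
    funext x
    rw [add_zero]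
  have tau_add : ∀ (a b : AddCircle (2 * Real.pi)) (f : X),
      τ (a + b) f = τ a (τ b f) := by
    intro a b f
    apply hJ
    apply Lp.ext
    have h3 := (mp a).quasiMeasurePreserving.ae_eq_comp (hτ b f)
    rw [hcomp a (τ b f)] at h3
    have h4 : ((fun x => (J f : AddCircle (2 * Real.pi) → ℂ) (x + b)) ∘ (fun x => x + a))
        = fun x => (J f : AddCircle (2 * Real.pi) → ℂ) (x + a + b) := rfl
    rw [h4] at h3
    refine (hτ (a + b) f).trans (EventuallyEq.trans ?_ ((hτ a (τ b f)).trans h3).symm)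
    apply Filter.EventuallyEq.of_eq
    funext x
    rw [add_assoc]
  have norm_J_tau : ∀ (a : AddCircle (2 * Real.pi)) (f : X), ‖J (τ a f)‖ = ‖J f‖ := by
    intro a f
    rw [Lp.norm_def, Lp.norm_def, eLpNorm_congr_ae (hτ a f)]
    congr 1
    rw [← hcomp a f]
    exact eLpNorm_comp_measurePreserving (Lp.aestronglyMeasurable (J f)) (mp a)
  constructor
  · rintro ⟨N, hN0, hNeq0, hNadd, hNsmul, ⟨c₁, hc₁, c₂, hc₂, hNequiv⟩, hH1, hH2, hH3⟩
    refine ⟨⟨c₂, hc₂, fun f => (hH1 f).trans (hNequiv f).2⟩, ?_⟩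
    intro f
    have h := hH3 f 0
    simp only [tau_zero] at h
    have key : ∀ b, ‖τ b f - f‖ ≤ c₁⁻¹ * N (τ b f - f) := by
      intro b
      have h1 := (hNequiv (τ b f - f)).1
      have h2 : c₁⁻¹ * (c₁ * ‖τ b f - f‖) ≤ c₁⁻¹ * N (τ b f - f) :=
        mul_le_mul_of_nonneg_left h1 (inv_nonneg.2 hc₁.le)
      rwa [← mul_assoc, inv_mul_cancel₀ hc₁.ne', one_mul] at h2
    have h2 := h.const_mul c₁⁻¹
    rw [mul_zero] at h2
    exact squeeze_zero (fun b => norm_nonneg _) key h2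
  · rintro ⟨⟨c, hc, hH1s⟩, hH3s⟩
    have hJcont : Continuous J := AddMonoidHomClass.continuous_of_bound J c hH1s
    have hcont_tau : ∀ a, Continuous (τ a) := by
      intro a
      apply LinearMap.continuous_of_seq_closed_graph
      intro u x y hu hy
      apply hJ
      have h1 : Tendsto (fun n => J (τ a (u n))) atTop (𝓝 (J y)) :=
        (hJcont.tendsto y).comp hy
      have h2 : Tendsto (fun n => J (τ a (u n))) atTop (𝓝 (J (τ a x))) := by
        rw [tendsto_iff_norm_sub_tendsto_zero]
        have h3 := (tendsto_iff_norm_sub_tendsto_zero.1 hu).const_mul c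
        rw [mul_zero] at h3
        refine squeeze_zero (fun n => norm_nonneg _) (fun n => ?_) h3
        have e1 : J (τ a (u n)) - J (τ a x) = J (τ a (u n) - τ a x) :=
          (map_sub J (τ a (u n)) (τ a x)).symm
        have e2 : τ a (u n) - τ a x = τ a (u n - x) := (map_sub (τ a) (u n) x).symm
        rw [e1, e2, norm_J_tau]
        exact hH1s _
      exact tendsto_nhds_unique h1 h2
    set T : AddCircle (2 * Real.pi) → X →L[ℂ] X := fun a => ⟨τ a, hcont_tau a⟩ with hTdef
    have horbit : ∀ f : X, Continuous (fun a => τ a f) := by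
      intro f
      rw [continuous_iff_continuousAt]
      intro a
      have h0 : Tendsto (fun s => τ s f) (𝓝 0) (𝓝 f) := by
        rw [tendsto_iff_norm_sub_tendsto_zero]
        exact hH3s f
      have hsub : Tendsto (fun b : AddCircle (2 * Real.pi) => b - a) (𝓝 a) (𝓝 0) := by
        have := (continuous_sub_right a).tendsto a
        rwa [sub_self] at this
      have hcomp := ((hcont_tau a).tendsto f).comp (h0.comp hsub)
      refine hcomp.congr ?_
      intro b
      show τ a (τ (b - a) f) = τ b f
      rw [← tau_add, show a + (b - a) = b from by rw [add_comm]; exact sub_add_cancel b a]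
    have hbddpt : ∀ f : X, ∃ C, ∀ a, ‖T a f‖ ≤ C := by
      intro f
      obtain ⟨C, hC⟩ := isCompact_univ.exists_bound_of_continuousOn (horbit f).continuousOn
      exact ⟨C, fun a => hC a (Set.mem_univ a)⟩
    obtain ⟨M₀, hM₀⟩ := banach_steinhaus hbddpt
    set M := max M₀ 1 with hMdef
    have hM1 : (1 : ℝ) ≤ M := le_max_right _ _
    have hMpos : (0 : ℝ) < M := lt_of_lt_of_le one_pos hM1
    have hbound : ∀ (a) (f : X), ‖τ a f‖ ≤ M * ‖f‖ := by
      intro a f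
      calc ‖τ a f‖ = ‖T a f‖ := rfl
        _ ≤ ‖T a‖ * ‖f‖ := (T a).le_opNorm f
        _ ≤ M * ‖f‖ :=
          mul_le_mul_of_nonneg_right ((hM₀ a).trans (le_max_left _ _)) (norm_nonneg f)
    set C := max c 1 with hCdef
    have hC1 : (1 : ℝ) ≤ C := le_max_right _ _
    have hCpos : (0 : ℝ) < C := lt_of_lt_of_le one_pos hC1
    set N0 : X → ℝ := fun f => ⨆ a, ‖τ a f‖ with hN0def
    have hbddA : ∀ f : X, BddAbove (Set.range fun a => ‖τ a f‖) := by
      intro f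
      exact ⟨M * ‖f‖, by rintro _ ⟨a, rfl⟩; exact hbound a f⟩
    have hle : ∀ (f : X) (a), ‖τ a f‖ ≤ N0 f := fun f a => le_ciSup (hbddA f) a
    have hN0_ge : ∀ f : X, ‖f‖ ≤ N0 f := by
      intro f
      have := hle f 0
      rwa [tau_zero] at this
    have hN0_le : ∀ f : X, N0 f ≤ M * ‖f‖ := fun f => ciSup_le fun a => hbound a f
    have hN0_nonneg : ∀ f : X, 0 ≤ N0 f := fun f => (norm_nonneg f).trans (hN0_ge f)
    have hN0_tau : ∀ (b : AddCircle (2 * Real.pi)) (f : X), N0 (τ b f) = N0 f := by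
      intro b f
      have hsurj : Function.Surjective (fun a : AddCircle (2 * Real.pi) => a + b) :=
        fun x => ⟨x - b, sub_add_cancel x b⟩
      have h1 : (fun a => ‖τ a (τ b f)‖) = (fun a => ‖τ a f‖) ∘ fun a => a + b := by
        funext a
        show ‖τ a (τ b f)‖ = ‖τ (a + b) f‖
        rw [tau_add]
      show (⨆ a, ‖τ a (τ b f)‖) = ⨆ a, ‖τ a f‖
      rw [← sSup_range, ← sSup_range, h1, hsurj.range_comp]
    refine ⟨fun f => C * N0 f, ?_, ?_, ?_, ?_, ?_, ?_, ?_, ?_⟩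
    · exact fun f => mul_nonneg hCpos.le (hN0_nonneg f)
    · intro f
      constructor
      · intro h
        have h0 : N0 f = 0 := by
          rcases mul_eq_zero.1 h with h' | h'
          · exact absurd h' hCpos.ne'
          · exact h'
        have h1 : ‖f‖ ≤ 0 := h0 ▸ hN0_ge f
        exact norm_le_zero_iff.1 h1
      · rintro rfl
        show C * N0 (0 : X) = 0
        have : N0 (0 : X) = 0 := by
          show (⨆ a, ‖τ a (0 : X)‖) = 0
          simp only [map_zero, norm_zero]
          exact ciSup_const
        rw [this, mul_zero]
    · intro f g
      have h1 : N0 (f + g) ≤ N0 f + N0 g := by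
        refine ciSup_le fun a => ?_
        rw [map_add]
        exact (norm_add_le _ _).trans (add_le_add (hle f a) (hle g a))
      calc C * N0 (f + g) ≤ C * (N0 f + N0 g) := mul_le_mul_of_nonneg_left h1 hCpos.le
        _ = C * N0 f + C * N0 g := mul_add _ _ _
    · intro k f
      have h1 : N0 (k • f) = ‖k‖ * N0 f := by
        show (⨆ a, ‖τ a (k • f)‖) = ‖k‖ * ⨆ a, ‖τ a f‖
        rw [Real.mul_iSup_of_nonneg (norm_nonneg k)]
        exact iSup_congr fun a => by rw [_root_.map_smul, norm_smul]
      show C * N0 (k • f) = ‖k‖ * (C * N0 f)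
      rw [h1]; ring
    · refine ⟨C, hCpos, C * M, mul_pos hCpos hMpos, fun f => ⟨?_, ?_⟩⟩
      · exact mul_le_mul_of_nonneg_left (hN0_ge f) hCpos.le
      · calc C * N0 f ≤ C * (M * ‖f‖) := mul_le_mul_of_nonneg_left (hN0_le f) hCpos.le
          _ = C * M * ‖f‖ := (mul_assoc _ _ _).symm
    · intro f
      calc ‖J f‖ ≤ c * ‖f‖ := hH1s f
        _ ≤ C * N0 f := mul_le_mul (le_max_left c 1) (hN0_ge f) (norm_nonneg f) hCpos.le
    · intro a f
      show C * N0 (τ a f) = C * N0 f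
      rw [hN0_tau]
    · intro f a
      have key : ∀ b, C * N0 (τ b f - τ a f) ≤ C * M * ‖τ (b - a) f - f‖ := by
        intro b
        have h1 : τ b f - τ a f = τ a (τ (b - a) f - f) := by
          rw [map_sub, ← tau_add, show a + (b - a) = b from by rw [add_comm]; exact sub_add_cancel b a]
        rw [h1, hN0_tau]
        calc C * N0 (τ (b - a) f - f) ≤ C * (M * ‖τ (b - a) f - f‖) :=
            mul_le_mul_of_nonneg_left (hN0_le _) hCpos.le
          _ = C * M * ‖τ (b - a) f - f‖ := (mul_assoc _ _ _).symm
      have hsub : Tendsto (fun b : AddCircle (2 * Real.pi) => b - a) (𝓝 a) (𝓝 0) := by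
        have := (continuous_sub_right a).tendsto a
        rwa [sub_self] at this
      have h2 : Tendsto (fun b => ‖τ (b - a) f - f‖) (𝓝 a) (𝓝 0) := (hH3s f).comp hsub
      have h3 := h2.const_mul (C * M)
      rw [mul_zero] at h3
      exact squeeze_zero (fun b => mul_nonneg hCpos.le (hN0_nonneg _)) key h3
end

section
/- Let f : T → ℂ be integrable (f ∈ L^1(T)) and let K be a closed subset of C_f, the set of all points of T at which f is continuous. Then the Cesàro means σ_n(x,f) of the Fourier series of f converge to f(x) uniformly on K as n → ∞. -/
/-!
The Cesàro means are convolutions `σ_n f(x) = ∫ f(t) F_n(x - t) dt` with the Fejér kernel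
`F_n(x) = |∑_{j ≤ n} e^{ijx}|² / (n + 1)`, which is nonnegative, has integral `1`, and is
`O(1/n)` uniformly on `{δ ≤ |x|}` because `|∑_{j ≤ n} e^{ijx}| ≤ 2 / |e^{ix} - 1|`. Hence
`|σ_n f(x) - f(x)| ≤ ε + O(1/n) (‖f‖₁ + |f(x)|)` as soon as `|f(t) - f(x)| ≤ ε` for `|t - x| < δ`.
On a compact set of continuity points `δ` can be chosen uniformly in `x` and `f` is bounded,
so the convergence is uniform.
-/

open MeasureTheory Filter Topology AddCircle

open Finset

section GeomSum

variable {K : Type*} [Field K] {z : K}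

lemma sum_Icc_zpow (m : ℕ) :
    ∑ k ∈ Icc (-(m : ℤ)) m, z ^ k
      = ∑ j ∈ range (m + 1), z ^ j + ∑ j ∈ range (m + 1), z⁻¹ ^ j - 1 := by
  induction m with
  | zero => simp
  | succ m ih =>
    have hIcc : Icc (-((m + 1 : ℕ) : ℤ)) (m + 1 : ℕ)
        = insert (-((m + 1 : ℕ) : ℤ)) (insert ((m + 1 : ℕ) : ℤ) (Icc (-(m : ℤ)) m)) := by
      ext k; simp only [mem_Icc, mem_insert]; omega
    rw [hIcc, sum_insert (by simp only [mem_insert, mem_Icc]; omega),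
      sum_insert (by simp only [mem_Icc]; omega), ih, sum_range_succ _ (m + 1),
      sum_range_succ _ (m + 1), zpow_neg, zpow_natCast, inv_pow]
    ring

lemma sum_range_sum_Icc_zpow (hz : z ≠ 0) (n : ℕ) :
    ∑ i ∈ range (n + 1), ∑ k ∈ Icc (-(i : ℤ)) i, z ^ k
      = (∑ j ∈ range (n + 1), z ^ j) * ∑ j ∈ range (n + 1), z⁻¹ ^ j := by
  induction n with
  | zero => simp
  | succ n ih =>
    rw [sum_range_succ, ih, sum_Icc_zpow, geom_sum_succ (x := z) (n := n + 1),
      geom_sum_succ (x := z⁻¹) (n := n + 1)]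
    linear_combination -((∑ j ∈ range (n + 1), z ^ j) * (∑ j ∈ range (n + 1), z⁻¹ ^ j))
      * mul_inv_cancel₀ hz

lemma norm_geom_sum_le {K : Type*} [NormedField K] {z : K} (hz : ‖z‖ ≤ 1) (hz1 : z ≠ 1)
    (n : ℕ) : ‖∑ j ∈ range n, z ^ j‖ ≤ 2 / ‖z - 1‖ := by
  rw [geom_sum_eq hz1, norm_div]
  gcongr
  calc ‖z ^ n - 1‖ ≤ ‖z‖ ^ n + ‖(1 : K)‖ := by rw [← norm_pow]; exact norm_sub_le _ _
    _ ≤ 2 := by rw [norm_one]; linarith [pow_le_one₀ (norm_nonneg z) hz (n := n)]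

end GeomSum

lemma MeasureTheory.Integrable.mul_continuous_of_compactSpace {X 𝕜 : Type*}
    [TopologicalSpace X] [CompactSpace X] [MeasurableSpace X] [OpensMeasurableSpace X]
    {μ : Measure X} [NormedField 𝕜] [SecondCountableTopologyEither X 𝕜] {f g : X → 𝕜} (hf : Integrable f μ)
    (hg : Continuous g) : Integrable (fun x => f x * g x) μ := by
  obtain ⟨C, hC⟩ := isCompact_univ.exists_bound_of_continuousOn hg.continuousOn
  exact hf.mul_bdd hg.aestronglyMeasurable (Eventually.of_forall fun x => hC x trivial)

lemma Continuous.integrable_of_compactSpace {X E : Type*} [TopologicalSpace X] [CompactSpace X]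
    [MeasurableSpace X] [OpensMeasurableSpace X] {μ : Measure X} [IsFiniteMeasureOnCompacts μ]
    [NormedAddCommGroup E] {g : X → E} (hg : Continuous g) : Integrable g μ :=
  hg.integrable_of_hasCompactSupport (HasCompactSupport.of_compactSpace g)

lemma integral_mul_le_of_forall_le_or_le {α : Type*} [MeasurableSpace α] {μ : Measure α}
    {g Φ : α → ℝ} {ε c : ℝ} (hg : Integrable g μ) (hΦ : Integrable Φ μ) (hg0 : ∀ t, 0 ≤ g t)
    (hΦ0 : ∀ t, 0 ≤ Φ t) (hε : 0 ≤ ε) (hc : 0 ≤ c) (h : ∀ t, g t ≤ ε ∨ Φ t ≤ c) :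
    ∫ t, g t * Φ t ∂μ ≤ ε * ∫ t, Φ t ∂μ + c * ∫ t, g t ∂μ := by
  rw [← integral_const_mul, ← integral_const_mul,
    ← integral_add (hΦ.const_mul ε) (hg.const_mul c)]
  refine integral_mono_of_nonneg (Eventually.of_forall fun t => mul_nonneg (hg0 t) (hΦ0 t))
    ((hΦ.const_mul ε).add (hg.const_mul c)) (Eventually.of_forall fun t => ?_)
  rcases h t with hgt | hΦt
  · linarith [mul_le_mul_of_nonneg_right hgt (hΦ0 t), mul_nonneg hc (hg0 t)]
  · linarith [mul_le_mul_of_nonneg_left hΦt (hg0 t), mul_nonneg hε (hΦ0 t)]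

lemma integral_norm_sub_const_le {α E : Type*} [MeasurableSpace α] {μ : Measure α}
    [IsProbabilityMeasure μ] [NormedAddCommGroup E] {f : α → E} (hf : Integrable f μ) (a : E) :
    ∫ t, ‖f t - a‖ ∂μ ≤ ∫ t, ‖f t‖ ∂μ + ‖a‖ := by
  calc ∫ t, ‖f t - a‖ ∂μ ≤ ∫ t, (‖f t‖ + ‖a‖) ∂μ :=
        integral_mono (hf.sub (integrable_const a)).norm (hf.norm.add (integrable_const _))
          fun t => norm_sub_le _ _
    _ = ∫ t, ‖f t‖ ∂μ + ‖a‖ := by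
        rw [integral_add hf.norm (integrable_const _), integral_const, probReal_univ, one_smul]

lemma IsCompact.exists_forall_dist_lt_of_continuousAt {α β : Type*} [PseudoMetricSpace α]
    [PseudoMetricSpace β] {K : Set α} (hK : IsCompact K) {f : α → β}
    (hf : ∀ x ∈ K, ContinuousAt f x) {ε : ℝ} (hε : 0 < ε) :
    ∃ δ > 0, ∀ x ∈ K, ∀ y, dist x y < δ → dist (f x) (f y) < ε := by
  obtain ⟨δ, hδ, h⟩ := Metric.mem_uniformity_dist.1 <|
    hK.uniformContinuousAt_of_continuousAt f hf (Metric.dist_mem_uniformity hε)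
  exact ⟨δ, hδ, fun x hx y hxy => h hxy hx⟩

section AddCircle

variable {T : ℝ}

lemma fourier_eq_zpow (k : ℤ) (x : AddCircle T) : fourier k x = (fourier 1 x : ℂ) ^ k := by
  rw [fourier_apply, toCircle_zsmul, fourier_one, Circle.coe_zpow]

lemma fourier_one_ne_one [Fact (0 < T)] {x : AddCircle T} (hx : x ≠ 0) :
    (fourier 1 x : ℂ) ≠ 1 := by
  rw [fourier_one, ← fourier_zero' (T := T), Ne, Circle.coe_inj,
    (injective_toCircle (Fact.out : 0 < T).ne').eq_iff]
  exact hx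

lemma fourier_sub (k : ℤ) (x t : AddCircle T) :
    fourier k (x - t) = fourier k x * fourier (-k) t := by
  simp only [fourier_eq_zpow k, fourier_eq_zpow (-k), sub_eq_add_neg, fourier_one, toCircle_add,
    Circle.coe_mul, toCircle_neg, Circle.coe_inv, zpow_neg, mul_zpow, inv_zpow]

lemma integral_fourier [Fact (0 < T)] (k : ℤ) :
    ∫ x, fourier k x ∂(haarAddCircle : Measure (AddCircle T)) = if k = 0 then 1 else 0 := by
  split_ifs with hk
  · simp [hk]
  · exact integral_eq_zero_of_add_right_eq_neg
      (fourier_add_half_inv_index hk (Fact.out : 0 < T))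

/-- The Fejér kernel `(D_0 + ⋯ + D_n) / (n + 1)`, in its closed form
`|1 + e^{ix} + ⋯ + e^{inx}|² / (n + 1)` (see `ofReal_fejerKernel`). -/
noncomputable def fejerKernel (n : ℕ) (x : AddCircle T) : ℝ :=
  ‖∑ j ∈ range (n + 1), (fourier 1 x : ℂ) ^ j‖ ^ 2 / (n + 1)

lemma fejerKernel_nonneg (n : ℕ) (x : AddCircle T) : 0 ≤ fejerKernel n x := by
  unfold fejerKernel; positivity

@[fun_prop]
lemma continuous_fejerKernel (n : ℕ) : Continuous (fejerKernel (T := T) n) := by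
  unfold fejerKernel; fun_prop

lemma ofReal_fejerKernel (n : ℕ) (x : AddCircle T) :
    (fejerKernel n x : ℂ)
      = ((n : ℂ) + 1)⁻¹ * ∑ i ∈ range (n + 1), ∑ k ∈ Icc (-(i : ℤ)) i, fourier k x := by
  set z : ℂ := fourier 1 x
  have hfourier : ∀ k : ℤ, fourier k x = z ^ k := fun k => fourier_eq_zpow k x
  have hz : z⁻¹ = (starRingEnd ℂ) z := Circle.coe_inv_eq_conj _
  have hz0 : z ≠ 0 := Circle.coe_ne_zero _
  simp_rw [hfourier, sum_range_sum_Icc_zpow hz0, hz, ← map_pow, ← map_sum, Complex.mul_conj',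
    fejerKernel]
  push_cast
  ring

lemma integral_fejerKernel [Fact (0 < T)] (n : ℕ) :
    ∫ x, fejerKernel n x ∂(haarAddCircle : Measure (AddCircle T)) = 1 := by
  have hint : ∀ k : ℤ, Integrable (fourier (T := T) k) haarAddCircle :=
    fun k => (fourier k).continuous.integrable_of_compactSpace
  apply Complex.ofReal_injective
  rw [← integral_complex_ofReal]
  simp_rw [ofReal_fejerKernel]
  rw [integral_const_mul,
    integral_finsetSum _ fun i _ => integrable_finsetSum _ fun k _ => hint k]
  simp_rw [integral_finsetSum _ fun k _ => hint k, integral_fourier]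
  simp [inv_mul_cancel₀ (Nat.cast_add_one_ne_zero (R := ℂ) n)]

lemma exists_fejerKernel_le_div [Fact (0 < T)] {δ : ℝ} (hδ : 0 < δ) :
    ∃ C, 0 ≤ C ∧ ∀ (n : ℕ) (x : AddCircle T), δ ≤ ‖x‖ → fejerKernel n x ≤ C / (n + 1) := by
  set S : Set (AddCircle T) := {x | δ ≤ ‖x‖}
  have hS : IsCompact S := (isClosed_le continuous_const continuous_norm).isCompact
  have hne : ∀ x ∈ S, (fourier 1 x : ℂ) ≠ 1 := fun x hx =>
    fourier_one_ne_one (norm_pos_iff.1 (hδ.trans_le hx))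
  obtain ⟨C, hC⟩ := hS.exists_bound_of_continuousOn
    (f := fun x => (2 / ‖(fourier 1 x : ℂ) - 1‖) ^ 2) <| by
      refine (continuousOn_const.div (by fun_prop) fun x hx => ?_).pow 2
      exact norm_ne_zero_iff.2 (sub_ne_zero.2 (hne x hx))
  refine ⟨max C 0, le_max_right _ _, fun n x hx => ?_⟩
  have hgeom := norm_geom_sum_le (by rw [fourier_one, Circle.norm_coe]) (hne x hx) (n + 1)
  unfold fejerKernel
  gcongr
  calc ‖∑ j ∈ range (n + 1), (fourier 1 x : ℂ) ^ j‖ ^ 2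
      ≤ (2 / ‖(fourier 1 x : ℂ) - 1‖) ^ 2 := by gcongr
    _ ≤ C := (Real.le_norm_self _).trans (hC x hx)
    _ ≤ max C 0 := le_max_left _ _

noncomputable def fejerMean [Fact (0 < T)] (f : AddCircle T → ℂ) (n : ℕ) (x : AddCircle T) :
    ℂ :=
  ((n : ℂ) + 1)⁻¹ • ∑ i ∈ range (n + 1),
    ∑ k ∈ Icc (-(i : ℤ)) (i : ℤ), fourierCoeff f k • fourier k x

lemma fourierCoeff_smul_fourier [Fact (0 < T)] (f : AddCircle T → ℂ) (k : ℤ)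
    (x : AddCircle T) :
    fourierCoeff f k • fourier k x = ∫ t, f t * fourier k (x - t) ∂haarAddCircle := by
  rw [fourierCoeff, smul_eq_mul, ← integral_mul_const]
  congr 1 with t
  rw [fourier_sub, smul_eq_mul]
  ring

lemma fejerMean_eq_integral [Fact (0 < T)] {f : AddCircle T → ℂ}
    (hf : Integrable f haarAddCircle) (n : ℕ) (x : AddCircle T) :
    fejerMean f n x = ∫ t, f t * fejerKernel n (x - t) ∂haarAddCircle := by
  have hint : ∀ k : ℤ, Integrable (fun t => f t * fourier k (x - t)) haarAddCircle := fun k =>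
    hf.mul_continuous_of_compactSpace (by fun_prop)
  simp_rw [ofReal_fejerKernel, mul_left_comm (f _), integral_const_mul, mul_sum]
  rw [fejerMean, smul_eq_mul,
    integral_finsetSum _ fun i _ => integrable_finsetSum _ fun k _ => hint k]
  simp_rw [integral_finsetSum _ fun k _ => hint k, fourierCoeff_smul_fourier]

lemma fejerMean_sub_eq_integral [Fact (0 < T)] {f : AddCircle T → ℂ}
    (hf : Integrable f haarAddCircle) (n : ℕ) (x : AddCircle T) :
    fejerMean f n x - f x = ∫ t, (f t - f x) * fejerKernel n (x - t) ∂haarAddCircle := by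
  have hker : Integrable (fun t => (fejerKernel n (x - t) : ℂ)) haarAddCircle :=
    (by fun_prop : Continuous _).integrable_of_compactSpace
  have hunit : ∫ t, (fejerKernel n (x - t) : ℂ) ∂haarAddCircle = 1 := by
    rw [integral_complex_ofReal, integral_sub_left_eq_self (fejerKernel n) haarAddCircle x,
      integral_fejerKernel, Complex.ofReal_one]
  simp_rw [sub_mul]
  rw [integral_sub (hf.mul_continuous_of_compactSpace (by fun_prop)) (hker.const_mul _),
    integral_const_mul, hunit, mul_one, fejerMean_eq_integral hf]

lemma norm_fejerMean_sub_le [Fact (0 < T)] {f : AddCircle T → ℂ}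
    (hf : Integrable f haarAddCircle) {n : ℕ} {x : AddCircle T} {δ ε c : ℝ} (hε : 0 ≤ ε)
    (hc : 0 ≤ c) (hnear : ∀ t, dist x t < δ → dist (f t) (f x) ≤ ε)
    (htail : ∀ y : AddCircle T, δ ≤ ‖y‖ → fejerKernel n y ≤ c) :
    ‖fejerMean f n x - f x‖ ≤ ε + c * ∫ t, ‖f t - f x‖ ∂haarAddCircle := by
  have hker : Integrable (fun t => fejerKernel n (x - t)) haarAddCircle :=
    (by fun_prop : Continuous _).integrable_of_compactSpace
  rw [fejerMean_sub_eq_integral hf]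
  calc ‖∫ t, (f t - f x) * fejerKernel n (x - t) ∂haarAddCircle‖
      ≤ ∫ t, ‖f t - f x‖ * fejerKernel n (x - t) ∂haarAddCircle := by
        refine (norm_integral_le_integral_norm _).trans_eq (integral_congr_ae ?_)
        filter_upwards with t
        rw [norm_mul, Complex.norm_real, Real.norm_of_nonneg (fejerKernel_nonneg _ _)]
    _ ≤ ε * ∫ t, fejerKernel n (x - t) ∂haarAddCircle
          + c * ∫ t, ‖f t - f x‖ ∂haarAddCircle := by
        refine integral_mul_le_of_forall_le_or_le (hf.sub (integrable_const _)).norm hker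
          (fun t => norm_nonneg _) (fun t => fejerKernel_nonneg _ _) hε hc fun t => ?_
        rcases lt_or_ge (dist x t) δ with hxt | hxt
        · exact .inl (dist_eq_norm (f t) (f x) ▸ hnear t hxt)
        · exact .inr (htail _ (dist_eq_norm x t ▸ hxt))
    _ = ε + c * ∫ t, ‖f t - f x‖ ∂haarAddCircle := by
        rw [integral_sub_left_eq_self (fejerKernel n) haarAddCircle x, integral_fejerKernel,
          mul_one]

end AddCircle

/-- **An extended Fejér theorem** (Theorem 4). Let `f ∈ L¹(𝕋)` and let `K` be a closed
subset of `C_f`, the set of points of `𝕋` at which `f` is continuous. Then the Cesàro means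
`σ_n(x,f)` of the Fourier series of `f` converge to `f(x)` uniformly on `K` as `n → ∞`. -/
theorem fejer_uniform_on_closed_subset_of_continuity_points
    (f : AddCircle (2 * Real.pi) → ℂ)
    (hf : Integrable f haarAddCircle)
    (K : Set (AddCircle (2 * Real.pi))) (hKclosed : IsClosed K)
    (hK : K ⊆ {x | ContinuousAt f x}) :
    TendstoUniformlyOn
      (fun (n : ℕ) (x : AddCircle (2 * Real.pi)) =>
        ((n : ℂ) + 1)⁻¹ • ∑ i ∈ Finset.range (n + 1),
          ∑ k ∈ Finset.Icc (-(i : ℤ)) (i : ℤ), fourierCoeff f k • fourier k x)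
      f atTop K := by
  obtain ⟨M, hM⟩ := hKclosed.isCompact.exists_bound_of_continuousOn
    fun x hx => (hK hx).continuousWithinAt
  rw [Metric.tendstoUniformlyOn_iff]
  intro ε hε
  obtain ⟨δ, hδ, hnear⟩ :=
    hKclosed.isCompact.exists_forall_dist_lt_of_continuousAt hK (half_pos hε)
  obtain ⟨C, hC, htail⟩ := exists_fejerKernel_le_div (T := 2 * Real.pi) hδ
  set B := ∫ t, ‖f t‖ ∂haarAddCircle + M with hB
  have hsmall : Tendsto (fun n : ℕ => C / (n + 1) * B) atTop (𝓝 0) := by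
    simpa [div_eq_mul_one_div C] using
      (tendsto_one_div_add_atTop_nhds_zero_nat.const_mul C).mul_const B
  filter_upwards [hsmall.eventually (gt_mem_nhds (half_pos hε))] with n hn x hx
  rw [dist_comm, dist_eq_norm]
  calc ‖fejerMean f n x - f x‖
      ≤ ε / 2 + C / (n + 1) * ∫ t, ‖f t - f x‖ ∂haarAddCircle :=
        norm_fejerMean_sub_le hf (half_pos hε).le (by positivity)
          (fun t ht => by rw [dist_comm]; exact (hnear x hx t ht).le) (htail n)
    _ ≤ ε / 2 + C / (n + 1) * B := by
        gcongr
        exact (integral_norm_sub_const_le hf _).trans (by rw [hB]; linarith [hM x hx])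
    _ < ε := by linarith
end
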